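/- arXiv:0803.3354 — 2 statements merged into one kernel-verified Lean document; each statement's English description precedes it below -/
import Mathlib

section
/- For α ≥ 1 and β with (2α+2)/(2α+1) ≤ β, the function g_β(ρ) = tan^{2α(β−1)}(ρ/2) · sin^{β−2}(ρ) · (2α + cos ρ) is nondecreasing on (0,π). -/
/-!
With `p = 2α(β-1)`, `t = tan(ρ/2)` and `c = cos ρ`, the logarithmic derivative of `tan(ρ/2)^p` is
`p / sin ρ`, so
`g_β'(ρ) = t^p sin^(β-3) ρ · ((p + (β-2)c)(2α + c) - (1 - c²))`.
The bracket is the quadratic `Q(c) = (β-1)c² + 2α(2β-3)c + 4α²(β-1) - 1`, which is nonnegative for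
`c ≤ 1`: if its vertex lies right of `1`, its minimum there is
`Q(1) = (2α+1)((2α+1)β - (2α+2)) ≥ 0`; otherwise `(2α+1)β > 3α+1` and its discriminant is
`≤ 0` because `α²(4β-5) - (β-1)` is increasing in `β` and equals `α(α-1) ≥ 0` at `β = (3α+1)/(2α+1)`.
-/

open Real Set

namespace GBeta

lemma quadratic_nonneg {α β c : ℝ} (hα : 1 ≤ α) (hβ : 2*α + 2 ≤ (2*α + 1)*β)
    (hc : c ≤ 1) :
    0 ≤ (2*α*(β-1) + (β-2)*c)*(2*α + c) - (1 - c^2) := by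
  have hβ₁ : 0 < β - 1 := by nlinarith
  rcases le_or_gt ((2*α + 1)*β) (3*α + 1) with hvertex | hvertex
  · have hQ₁ : 0 ≤ (2*α + 1)*((2*α + 1)*β - (2*α + 2)) := by
      apply mul_nonneg <;> linarith
    have hslope : 0 ≤ (1 - c)*(2*(3*α + 1) - 2*((2*α + 1)*β)) := by
      apply mul_nonneg <;> linarith
    nlinarith [mul_nonneg hβ₁.le (sq_nonneg (1 - c))]
  · have hdisc : 0 ≤ α^2*(4*β - 5) - (β - 1) := by
      nlinarith [mul_nonneg (by linarith : (0:ℝ) ≤ 2*α - 1)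
          (by linarith : (0:ℝ) ≤ (2*α + 1)*β - (3*α + 1)),
        mul_nonneg (by linarith : (0:ℝ) ≤ α) (by linarith : (0:ℝ) ≤ α - 1)]
    nlinarith [sq_nonneg ((β - 1)*c + α*(2*β - 3))]

lemma tan_half_pos {x : ℝ} (hx : x ∈ Ioo 0 π) : 0 < tan (x/2) :=
  tan_pos_of_pos_of_lt_pi_div_two (by linarith [hx.1]) (by linarith [hx.2])

lemma hasDerivAt_tan_half_rpow (p : ℝ) {x : ℝ} (hx : x ∈ Ioo 0 π) :
    HasDerivAt (fun y => tan (y/2) ^ p) (p * tan (x/2) ^ p / sin x) x := by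
  have hcos : 0 < cos (x/2) := cos_pos_of_mem_Ioo ⟨by linarith [pi_pos, hx.1], by linarith [hx.2]⟩
  have hsin : 0 < sin (x/2) :=
    sin_pos_of_pos_of_lt_pi (by linarith [hx.1]) (by linarith [pi_pos, hx.2])
  have htan : tan (x/2) ^ (p - 1) = tan (x/2) ^ p / tan (x/2) := by
    rw [rpow_sub (tan_half_pos hx), rpow_one]
  have hsin_double : sin x = 2 * sin (x/2) * cos (x/2) := by
    rw [← sin_two_mul]; ring_nf
  have htan_half : HasDerivAt (fun y => tan (y/2)) (1 / cos (x/2) ^ 2 * (1/2)) x := by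
    exact (hasDerivAt_tan hcos.ne').comp x ((hasDerivAt_id' x).div_const 2)
  refine (htan_half.rpow_const (Or.inl (tan_half_pos hx).ne')).congr_deriv ?_
  rw [htan, tan_eq_sin_div_cos, hsin_double]
  field_simp

noncomputable def g (α β ρ : ℝ) : ℝ :=
  tan (ρ/2) ^ (2*α*(β - 1)) * sin ρ ^ (β - 2) * (2*α + cos ρ)

lemma hasDerivAt_g (α β : ℝ) {x : ℝ} (hx : x ∈ Ioo 0 π) :
    HasDerivAt (g α β) (tan (x/2) ^ (2*α*(β-1)) * sin x ^ (β - 3) *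
      ((2*α*(β-1) + (β-2)*cos x)*(2*α + cos x) - (1 - cos x ^ 2))) x := by
  have hsin : 0 < sin x := sin_pos_of_pos_of_lt_pi hx.1 hx.2
  have hsin_pow : sin x ^ (β - 2) = sin x ^ (β - 3) * sin x := by
    rw [← rpow_add_one hsin.ne']; ring_nf
  have hsin_pow' : sin x ^ (β - 2 - 1) = sin x ^ (β - 3) := by ring_nf
  refine (((hasDerivAt_tan_half_rpow _ hx).mul
    ((hasDerivAt_sin x).rpow_const (p := β - 2) (Or.inl hsin.ne'))).mul
    ((hasDerivAt_cos x).const_add (2*α))).congr_deriv ?_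
  have hsin_sq : 1 - cos x ^ 2 = sin x ^ 2 := by rw [← sin_sq_add_cos_sq x]; ring
  simp only [Pi.mul_apply]
  rw [hsin_pow, hsin_pow', hsin_sq]
  field_simp
  ring

end GBeta

/-- For `α ≥ 1` and `β` with `(2α+2)/(2α+1) ≤ β`, the function
`g_β(ρ) = tan^{2α(β−1)}(ρ/2) · sin^{β−2}(ρ) · (2α + cos ρ)` is nondecreasing on `(0,π)`. -/
theorem g_beta_monotone (α β : ℝ) (hα : 1 ≤ α) (hβ : (2*α + 2)/(2*α + 1) ≤ β) :
    MonotoneOn (fun ρ : ℝ =>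
      Real.tan (ρ/2) ^ (2*α*(β - 1)) * Real.sin ρ ^ (β - 2) * (2*α + Real.cos ρ))
      (Set.Ioo 0 π) := by
  have hβ' : 2*α + 2 ≤ (2*α + 1)*β := by rwa [div_le_iff₀' (by linarith)] at hβ
  refine monotoneOn_of_hasDerivWithinAt_nonneg (f := GBeta.g α β) (convex_Ioo 0 π)
    (fun x hx => (GBeta.hasDerivAt_g α β hx).continuousAt.continuousWithinAt)
    (fun x hx => (GBeta.hasDerivAt_g α β (interior_subset hx)).hasDerivWithinAt) ?_
  rw [interior_Ioo]
  intro x hx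
  have hsin : 0 < sin x := sin_pos_of_pos_of_lt_pi hx.1 hx.2
  have hQ := GBeta.quadratic_nonneg (c := cos x) hα hβ' (cos_le_one x)
  have htan := GBeta.tan_half_pos hx
  positivity
end

section
/- For α ≥ 1 and ρ ∈ (0,π), θ ∈ (0,π/α), the conformal-type map (x,y) = (f(ρ) cos αθ, f(ρ) sin αθ) with f(ρ) = 2^{1/3} sin^{(1+2α)/3}(ρ/2) cos^{(1−2α)/3}(ρ/2) satisfies the pointwise metric inequality α² tan^{4α}(ρ/2) sin⁴(αθ) (dρ² + sin²ρ dθ²) ≥ y⁴ (dx² + dy²), i.e. coefficientwise both α² tan^{4α}(ρ/2) ≥ f⁴(ρ) f'(ρ)² and tan^{4α}(ρ/2) sin²ρ ≥ f⁶(ρ) hold. -/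
open Real

/-- For `α ≥ 1`, `ρ ∈ (0,π)`, `θ ∈ (0,π/α)`, the map
`(x,y) = (f(ρ) cos αθ, f(ρ) sin αθ)` with
`f(ρ) = 2^{1/3} sin^{(1+2α)/3}(ρ/2) cos^{(1−2α)/3}(ρ/2)` satisfies the pointwise metric
inequality `α² tan^{4α}(ρ/2) sin⁴(αθ) (dρ² + sin²ρ dθ²) ≥ y⁴ (dx² + dy²)`, which holds
coefficientwise: `α² tan^{4α}(ρ/2) ≥ f⁴(ρ) f'(ρ)²` and `tan^{4α}(ρ/2) sin²ρ ≥ f⁶(ρ)`. -/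
theorem metric_inequality (α : ℝ) (hα : 1 ≤ α) (ρ θ : ℝ)
    (hρ : ρ ∈ Set.Ioo 0 π) (hθ : θ ∈ Set.Ioo 0 (π/α)) :
    (fun r => (2:ℝ) ^ ((1:ℝ)/3) * Real.sin (r/2) ^ ((1 + 2*α)/3) *
        Real.cos (r/2) ^ ((1 - 2*α)/3)) ρ ^ 4 *
      deriv (fun r => (2:ℝ) ^ ((1:ℝ)/3) * Real.sin (r/2) ^ ((1 + 2*α)/3) *
        Real.cos (r/2) ^ ((1 - 2*α)/3)) ρ ^ 2
        ≤ α ^ 2 * Real.tan (ρ/2) ^ (4*α)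
    ∧ (fun r => (2:ℝ) ^ ((1:ℝ)/3) * Real.sin (r/2) ^ ((1 + 2*α)/3) *
        Real.cos (r/2) ^ ((1 - 2*α)/3)) ρ ^ 6
        ≤ Real.tan (ρ/2) ^ (4*α) * Real.sin ρ ^ 2 := by
  obtain ⟨hρ0, hρπ⟩ := hρ
  have hπ := Real.pi_pos
  have hs : 0 < Real.sin (ρ/2) := Real.sin_pos_of_pos_of_lt_pi (by linarith) (by linarith)
  have hc : 0 < Real.cos (ρ/2) := Real.cos_pos_of_mem_Ioo ⟨by linarith, by linarith⟩
  set s := Real.sin (ρ/2) with hs_def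
  set c := Real.cos (ρ/2) with hc_def
  set a := (1 + 2*α)/3 with ha_def
  set b := (1 - 2*α)/3 with hb_def
  set T := (2:ℝ) ^ ((1:ℝ)/3) with hT_def
  have hT : 0 < T := Real.rpow_pos_of_pos (by norm_num) _
  -- derivative
  have h2 : HasDerivAt (fun r : ℝ => r/2) (1/2) ρ := by
    simpa using (hasDerivAt_id ρ).div_const 2
  have hsin : HasDerivAt (fun r : ℝ => Real.sin (r/2)) (c * (1/2)) ρ := h2.sin
  have hcos : HasDerivAt (fun r : ℝ => Real.cos (r/2)) (-s * (1/2)) ρ := h2.cos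
  have hsa : HasDerivAt (fun r : ℝ => Real.sin (r/2) ^ a) (c * (1/2) * a * s ^ (a-1)) ρ :=
    hsin.rpow_const (Or.inl hs.ne')
  have hcb : HasDerivAt (fun r : ℝ => Real.cos (r/2) ^ b) (-s * (1/2) * b * c ^ (b-1)) ρ :=
    hcos.rpow_const (Or.inl hc.ne')
  have hF : HasDerivAt (fun r => T * Real.sin (r/2) ^ a * Real.cos (r/2) ^ b)
      (T * (c * (1/2) * a * s ^ (a-1)) * c ^ b + T * s ^ a * (-s * (1/2) * b * c ^ (b-1))) ρ := by
    exact (hsa.const_mul T).mul hcb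
  have hderiv : deriv (fun r => T * Real.sin (r/2) ^ a * Real.cos (r/2) ^ b) ρ
      = T * (c * (1/2) * a * s ^ (a-1)) * c ^ b + T * s ^ a * (-s * (1/2) * b * c ^ (b-1)) :=
    hF.deriv
  simp only [hderiv]
  -- algebraic identities
  have hpyth : s ^ 2 + c ^ 2 = 1 := Real.sin_sq_add_cos_sq _
  have hcosρ : Real.cos ρ = c ^ 2 - s ^ 2 := by
    rw [show ρ = 2 * (ρ/2) by ring, Real.cos_two_mul']
  have hsinρ : Real.sin ρ = 2 * s * c := by
    rw [show ρ = 2 * (ρ/2) by ring, Real.sin_two_mul]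
  have hp : ∀ (x : ℝ), 0 < x → ∀ (p : ℝ) (n : ℕ), (x ^ p) ^ n = x ^ (p * n) := by
    intro x hx p n
    rw [← Real.rpow_natCast (x ^ p) n, ← Real.rpow_mul hx.le]
  have hsplit_s : s ^ a = s ^ (a - 1) * s := by
    nth_rewrite 1 [show a = (a-1) + 1 by ring]
    exact Real.rpow_add_one hs.ne' _
  have hsplit_c : c ^ b = c ^ (b - 1) * c := by
    nth_rewrite 1 [show b = (b-1) + 1 by ring]
    exact Real.rpow_add_one hc.ne' _
  have hT6 : T ^ (6:ℕ) = 4 := by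
    rw [hT_def, ← Real.rpow_natCast ((2:ℝ) ^ ((1:ℝ)/3)) 6, ← Real.rpow_mul (by norm_num)]
    norm_num
  have e2 : (s ^ (a-1)) ^ (6:ℕ) * s ^ (4:ℕ) = s ^ (4*α) := by
    rw [hp s hs, ← Real.rpow_natCast s 4, ← Real.rpow_add hs]
    congr 1
    rw [ha_def]; push_cast; ring
  have e3 : (c ^ (b-1)) ^ (6:ℕ) * c ^ (4:ℕ) = c ^ (-(4*α)) := by
    rw [hp c hc, ← Real.rpow_natCast c 4, ← Real.rpow_add hc]
    congr 1
    rw [hb_def]; push_cast; ring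
  have htan : Real.tan (ρ/2) ^ (4*α) = s ^ (4*α) * c ^ (-(4*α)) := by
    rw [Real.tan_eq_sin_div_cos, ← hs_def, ← hc_def, Real.div_rpow hs.le hc.le,
      Real.rpow_neg hc.le, div_eq_mul_inv]
  have hq : a * c ^ 2 - b * s ^ 2 = (Real.cos ρ + 2*α)/3 := by
    rw [hcosρ, ha_def, hb_def]
    field_simp
    linear_combination 2 * α * hpyth
  have hposT : 0 < s ^ (4*α) * c ^ (-(4*α)) := by positivity
  constructor
  · -- first inequality
    have key : (T * s ^ a * c ^ b) ^ 4 *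
        (T * (c * (1/2) * a * s ^ (a-1)) * c ^ b + T * s ^ a * (-s * (1/2) * b * c ^ (b-1))) ^ 2
        = s ^ (4*α) * c ^ (-(4*α)) * ((Real.cos ρ + 2*α)/3) ^ 2 := by
      rw [hsplit_s, hsplit_c]
      have hr : (T * (s ^ (a-1) * s) * (c ^ (b-1) * c)) ^ 4 *
          (T * (c * (1/2) * a * s ^ (a-1)) * (c ^ (b-1) * c)
            + T * (s ^ (a-1) * s) * (-s * (1/2) * b * c ^ (b-1))) ^ 2
          = T ^ (6:ℕ) * ((s ^ (a-1)) ^ (6:ℕ) * s ^ (4:ℕ)) * ((c ^ (b-1)) ^ (6:ℕ) * c ^ (4:ℕ))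
            * ((a * c ^ 2 - b * s ^ 2)/2) ^ 2 := by ring
      rw [hr, hT6, e2, e3, hq]
      ring
    rw [key, htan]
    have hX : ((Real.cos ρ + 2*α)/3) ^ 2 ≤ α ^ 2 := by
      nlinarith [Real.neg_one_le_cos ρ, Real.cos_le_one ρ]
    calc s ^ (4*α) * c ^ (-(4*α)) * ((Real.cos ρ + 2*α)/3) ^ 2
        ≤ s ^ (4*α) * c ^ (-(4*α)) * α ^ 2 :=
          mul_le_mul_of_nonneg_left hX hposT.le
      _ = α ^ 2 * (s ^ (4*α) * c ^ (-(4*α))) := by ring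
  · -- second: equality
    have e6s : (s ^ a) ^ (6:ℕ) = s ^ (4*α) * s ^ (2:ℕ) := by
      rw [hp s hs, ← Real.rpow_natCast s 2, ← Real.rpow_add hs]
      congr 1
      rw [ha_def]; push_cast; ring
    have e6c : (c ^ b) ^ (6:ℕ) = c ^ (-(4*α)) * c ^ (2:ℕ) := by
      rw [hp c hc, ← Real.rpow_natCast c 2, ← Real.rpow_add hc]
      congr 1
      rw [hb_def]; push_cast; ring
    rw [htan, hsinρ]
    apply le_of_eq
    calc (T * s ^ a * c ^ b) ^ 6 = T ^ (6:ℕ) * (s ^ a) ^ (6:ℕ) * (c ^ b) ^ (6:ℕ) := by ring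
      _ = 4 * (s ^ (4*α) * s ^ 2) * (c ^ (-(4*α)) * c ^ 2) := by rw [hT6, e6s, e6c]
      _ = s ^ (4*α) * c ^ (-(4*α)) * (2 * s * c) ^ 2 := by ring
end
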